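/- Let G be a graph of maximum degree at least 2 with γ(G) < γ_I(G), let H be a graph and v ∈ V(H). Then γ_I(G∘_v H) = n(G)·(γ_I(H) − 1) + γ_I(G) if and only if γ_I(H − {v}) = γ_I(H) − 1 and both of the following hold: (i) every γ_I(H − {v})-function g satisfies g(y) = 0 for every neighbour y of v in H; (ii) every γ_I(H)-function h satisfies h(v) ≠ 2. -/

import Mathlib

open Finset

open scoped Classical

/-- An Italian dominating function on a finite simple graph: values in {0,1,2} and
every vertex with value 0 has neighbour values summing to at least 2. -/
noncomputable def IsIDF {α : Type*} [Fintype α] (G : SimpleGraph α) (f : α → ℕ) : Prop :=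
  (∀ u, f u ≤ 2) ∧
    ∀ u, f u = 0 → 2 ≤ ∑ w ∈ Finset.univ.filter (fun w => G.Adj u w), f w

/-- The Italian domination number γ_I(G). -/
noncomputable def italianNumber {α : Type*} [Fintype α] (G : SimpleGraph α) : ℕ :=
  sInf {n | ∃ f : α → ℕ, IsIDF G f ∧ ∑ u, f u = n}

/-- A γ_I(G)-function: an IDF on G of minimum weight. -/
noncomputable def IsMinIDF {α : Type*} [Fintype α] (G : SimpleGraph α) (f : α → ℕ) : Prop :=
  IsIDF G f ∧ ∑ u, f u = italianNumber G

/-- D is a dominating set of G. -/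
def IsDomSet {α : Type*} (G : SimpleGraph α) (D : Set α) : Prop :=
  ∀ u ∉ D, ∃ w ∈ D, G.Adj u w

/-- The domination number γ(G). -/
noncomputable def dominationNumber {α : Type*} [Fintype α] (G : SimpleGraph α) : ℕ :=
  sInf {n | ∃ D : Finset α, IsDomSet G ↑D ∧ D.card = n}

/-- The degree of a vertex. -/
noncomputable def deg {α : Type*} [Fintype α] (G : SimpleGraph α) (u : α) : ℕ :=
  (Finset.univ.filter (fun w => G.Adj u w)).card

/-- The rooted product G∘_v H: one copy of H for each vertex of G, the root v of the
x-th copy being identified with the vertex x of G. The pair (x, y) is the vertex y of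
the x-th copy of H; in particular (x, v) is the vertex x of G. -/
def rootedProd {α β : Type*} (G : SimpleGraph α) (H : SimpleGraph β) (v : β) :
    SimpleGraph (α × β) where
  Adj p q := (p.1 = q.1 ∧ H.Adj p.2 q.2) ∨ (p.2 = v ∧ q.2 = v ∧ G.Adj p.1 q.1)
  symm := by
    constructor
    rintro ⟨x, y⟩ ⟨x', y'⟩ (⟨h1, h2⟩ | ⟨h1, h2, h3⟩)
    · exact Or.inl ⟨h1.symm, h2.symm⟩
    · exact Or.inr ⟨h2, h1, h3.symm⟩
  loopless := by
    constructor
    rintro ⟨x, y⟩ (⟨_, h⟩ | ⟨_, _, h⟩)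
    · exact H.loopless.irrefl _ h
    · exact G.loopless.irrefl _ h

/-- The weight ω(f_x) of the restriction of f to the copy H_x. -/
def copyWeight {α β : Type*} [Fintype β] (f : α × β → ℕ) (x : α) : ℕ :=
  ∑ y, f (x, y)

/-- The graph H − {v} obtained from H by deleting the vertex v. -/
def deleteVertex {β : Type*} (H : SimpleGraph β) (v : β) : SimpleGraph {w : β // w ≠ v} :=
  SimpleGraph.induce {w : β | w ≠ v} H

/-!
Write `γ = γ_I(H)`, `γ' = γ_I(H - v)` and `n = n(G)`. In an IDF `f` of `G ∘_v H` every copy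
`f_x` weighs at least `min γ γ'`, and at least `γ` when its root is positive (it is then an IDF
of `H`). Gluing a `γ_I(H - v)`-function onto every copy and a `γ_I(G)`-function onto the roots
gives `γ_I(G ∘_v H) ≤ n γ' + γ_I(G)`; together with `n · min γ γ' ≤ γ_I(G ∘_v H)` and
`γ_I(G) < n`, the equality forces `γ' = γ - 1`. If (i) or (ii) fails, a dominating set of `G`
can replace the `γ_I(G)`-function on the roots, giving weight
`n (γ - 1) + γ(G) < n (γ - 1) + γ_I(G)`. Conversely, under `γ' = γ - 1`, (i) and (ii), the
excess `min (ω(f_x) - (γ - 1)) 2` of the copies is an IDF of `G`: by (ii) it bounds the root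
value, and a copy of weight `γ - 1` has root value 0 and, by (i), gives its root nothing.
-/

noncomputable def nbrWeight {α : Type*} [Fintype α] (G : SimpleGraph α) (f : α → ℕ) (u : α) : ℕ :=
  ∑ w ∈ univ.filter (fun w => G.Adj u w), f w

section ItalianNumber

variable {α : Type*} [Fintype α] (G : SimpleGraph α)

theorem isIDF_iff {f : α → ℕ} :
    IsIDF G f ↔ (∀ u, f u ≤ 2) ∧ ∀ u, f u = 0 → 2 ≤ nbrWeight G f u :=
  Iff.rfl

theorem le_nbrWeight_of_adj (f : α → ℕ) {u w : α} (h : G.Adj u w) : f w ≤ nbrWeight G f u :=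
  single_le_sum (fun _ _ => Nat.zero_le _) (by simpa using h)

theorem nbrWeight_mono {f f' : α → ℕ} (h : ∀ w, f w ≤ f' w) (u : α) :
    nbrWeight G f u ≤ nbrWeight G f' u :=
  sum_le_sum fun w _ => h w

theorem nbrWeight_congr {f f' : α → ℕ} {u : α} (h : ∀ w, G.Adj u w → f w = f' w) :
    nbrWeight G f u = nbrWeight G f' u :=
  sum_congr rfl fun w hw => h w (mem_filter.mp hw).2

theorem italianNumber_le {f : α → ℕ} (hf : IsIDF G f) : italianNumber G ≤ ∑ u, f u :=
  Nat.sInf_le ⟨f, hf, rfl⟩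

theorem exists_isMinIDF : ∃ f, IsMinIDF G f :=
  Nat.sInf_mem (s := {n | ∃ f : α → ℕ, IsIDF G f ∧ ∑ u, f u = n})
    ⟨_, fun _ => 1, ⟨fun _ => one_le_two, fun _ h => absurd h one_ne_zero⟩, rfl⟩

theorem le_italianNumber {k : ℕ} (h : ∀ f, IsIDF G f → k ≤ ∑ u, f u) : k ≤ italianNumber G := by
  obtain ⟨f, hf, hw⟩ := exists_isMinIDF G
  exact hw ▸ h f hf

theorem one_le_italianNumber (u : α) : 1 ≤ italianNumber G := by
  refine le_italianNumber G fun f hf => Nat.one_le_iff_ne_zero.mpr fun h0 => ?_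
  have hz : ∀ u, f u = 0 := fun u => sum_eq_zero_iff.mp h0 u (mem_univ u)
  simpa [nbrWeight, hz] using hf.2 u (hz u)

/-- Put 2 on a vertex `u` with two neighbours `a`, `b`, put 0 on `a` and `b`, and 1 elsewhere. -/
theorem italianNumber_lt_card (hG : ∃ u, 2 ≤ deg G u) : italianNumber G < Fintype.card α := by
  obtain ⟨u, hu⟩ := hG
  obtain ⟨a, ha, b, hb, hab⟩ := one_lt_card.mp (show 1 < (univ.filter (G.Adj u)).card from hu)
  rw [mem_filter] at ha hb
  have hua : u ≠ a := G.ne_of_adj ha.2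
  have hub : u ≠ b := G.ne_of_adj hb.2
  let f : α → ℕ := fun w => if w = a ∨ w = b then 0 else if w = u then 2 else 1
  have hf : IsIDF G f := by
    refine (isIDF_iff G).mpr ⟨fun w => by dsimp only [f]; split_ifs <;> omega, fun w hw => ?_⟩
    have hw' : w = a ∨ w = b := by
      by_contra h
      dsimp only [f] at hw
      split_ifs at hw
    have hwu : G.Adj w u := by rcases hw' with rfl | rfl <;> [exact ha.2.symm; exact hb.2.symm]
    simpa [f, hua, hub] using le_nbrWeight_of_adj G f hwu
  have hpoint : ∀ w, f w + ((if w = a then 1 else 0) + if w = b then 1 else 0) =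
      1 + if w = u then 1 else 0 := by
    intro w
    dsimp only [f]
    by_cases hwa : w = a <;> by_cases hwb : w = b <;> by_cases hwu : w = u <;> simp_all
  have hsum := congrArg (fun g : α → ℕ => ∑ w, g w) (funext hpoint)
  simp only [sum_add_distrib, sum_ite_eq', mem_univ, if_true, sum_const, card_univ,
    smul_eq_mul, mul_one] at hsum
  have := italianNumber_le G hf
  omega

theorem exists_isDomSet_card_eq : ∃ D : Finset α, IsDomSet G ↑D ∧ D.card = dominationNumber G :=
  Nat.sInf_mem (s := {n | ∃ D : Finset α, IsDomSet G ↑D ∧ D.card = n})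
    ⟨_, univ, fun u hu => absurd (mem_univ u) hu, rfl⟩

end ItalianNumber

section ExtendRoot

variable {β : Type*} {v : β} {c : ℕ} {g : {w : β // w ≠ v} → ℕ}

noncomputable def extendRoot (v : β) (c : ℕ) (g : {w : β // w ≠ v} → ℕ) (y : β) : ℕ :=
  if h : y = v then c else g ⟨y, h⟩

@[simp]
theorem extendRoot_self : extendRoot v c g v = c :=
  dif_pos rfl

theorem extendRoot_of_ne {y : β} (hy : y ≠ v) : extendRoot v c g y = g ⟨y, hy⟩ :=
  dif_neg hy

@[simp]
theorem extendRoot_val (b : {w : β // w ≠ v}) : extendRoot v c g b = g b :=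
  dif_neg b.2

end ExtendRoot

section DeleteVertex

variable {β : Type*} [Fintype β] (H : SimpleGraph β) (v : β)

theorem nbrWeight_eq_nbrWeight_deleteVertex_add (F : β → ℕ) (a : {w : β // w ≠ v}) :
    nbrWeight H F a = nbrWeight (deleteVertex H v) (fun b => F b) a +
      if H.Adj a v then F v else 0 := by
  simp only [nbrWeight, sum_filter]
  rw [Fintype.sum_eq_add_sum_subtype_ne _ v, add_comm]
  rfl

def IsIDFAwayFrom (φ : β → ℕ) : Prop :=
  (∀ y, φ y ≤ 2) ∧ ∀ y, y ≠ v → φ y = 0 → 2 ≤ nbrWeight H φ y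

variable {H v} {c : ℕ} {g : {w : β // w ≠ v} → ℕ}

theorem IsIDF.isIDFAwayFrom {φ : β → ℕ} (h : IsIDF H φ) : IsIDFAwayFrom H v φ :=
  ⟨h.1, fun y _ => h.2 y⟩

theorem IsIDFAwayFrom.isIDF {φ : β → ℕ} (h : IsIDFAwayFrom H v φ)
    (hv : φ v = 0 → 2 ≤ nbrWeight H φ v) : IsIDF H φ := by
  refine ⟨h.1, fun y hy => ?_⟩
  by_cases hyv : y = v
  · exact hyv ▸ hv (hyv ▸ hy)
  · exact h.2 y hyv hy

theorem IsIDFAwayFrom.isIDF_deleteVertex {φ : β → ℕ} (h : IsIDFAwayFrom H v φ) (hv : φ v = 0) :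
    IsIDF (deleteVertex H v) (fun b => φ b) := by
  refine (isIDF_iff _).mpr ⟨fun b => h.1 b, fun b hb => ?_⟩
  simpa [nbrWeight_eq_nbrWeight_deleteVertex_add H v φ b, hv] using h.2 b b.2 hb

theorem sum_extendRoot : ∑ y, extendRoot v c g y = c + ∑ b, g b := by
  simp [Fintype.sum_eq_add_sum_subtype_ne _ v]

theorem nbrWeight_extendRoot_self (c' : ℕ) :
    nbrWeight H (extendRoot v c g) v = nbrWeight H (extendRoot v c' g) v :=
  nbrWeight_congr H fun y hy => by
    simp [extendRoot_of_ne (H.ne_of_adj hy).symm]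

theorem IsIDF.isIDFAwayFrom_extendRoot (hg : IsIDF (deleteVertex H v) g) (hc : c ≤ 2) :
    IsIDFAwayFrom H v (extendRoot v c g) := by
  refine ⟨fun y => ?_, fun y hy h0 => ?_⟩
  · by_cases hyv : y = v
    · simpa [hyv] using hc
    · simpa [extendRoot_of_ne hyv] using hg.1 ⟨y, hyv⟩
  · have h2 : 2 ≤ nbrWeight (deleteVertex H v) (fun b => extendRoot v c g b) ⟨y, hy⟩ := by
      simpa [nbrWeight] using hg.2 ⟨y, hy⟩ (by simpa [extendRoot_of_ne hy] using h0)
    rw [show y = (⟨y, hy⟩ : {w : β // w ≠ v}) from rfl, nbrWeight_eq_nbrWeight_deleteVertex_add]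
    omega

end DeleteVertex

section RootedProd

variable {α β : Type*} [Fintype α] [Fintype β] (G : SimpleGraph α) (H : SimpleGraph β) (v : β)

theorem nbrWeight_rootedProd_of_ne (f : α × β → ℕ) (x : α) {y : β} (hy : y ≠ v) :
    nbrWeight (rootedProd G H v) f (x, y) = nbrWeight H (fun y' => f (x, y')) y := by
  have hnbr : univ.filter (fun w => (rootedProd G H v).Adj (x, y) w) =
      (univ.filter (fun y' => H.Adj y y')).map ⟨(x, ·), Prod.mk_right_injective x⟩ := by
    ext ⟨x', y'⟩
    simp only [rootedProd, hy, mem_filter, mem_univ, true_and, mem_map, Function.Embedding.coeFn_mk,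
      Prod.mk.injEq, false_and, or_false]
    constructor
    · rintro ⟨rfl, h⟩
      exact ⟨y', h, rfl, rfl⟩
    · rintro ⟨y'', h, rfl, rfl⟩
      exact ⟨rfl, h⟩
  rw [nbrWeight, hnbr, sum_map]
  rfl

theorem nbrWeight_rootedProd_root (f : α × β → ℕ) (x : α) :
    nbrWeight (rootedProd G H v) f (x, v) =
      nbrWeight H (fun y => f (x, y)) v + nbrWeight G (fun x' => f (x', v)) x := by
  have hnbr : univ.filter (fun w => (rootedProd G H v).Adj (x, v) w) =
      (univ.filter (fun y => H.Adj v y)).map ⟨(x, ·), Prod.mk_right_injective x⟩ ∪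
        (univ.filter (fun x' => G.Adj x x')).map ⟨(·, v), Prod.mk_left_injective v⟩ := by
    ext ⟨x', y'⟩
    simp only [rootedProd, mem_filter, mem_univ, true_and, mem_union, mem_map,
      Function.Embedding.coeFn_mk, Prod.mk.injEq]
    constructor
    · rintro (⟨rfl, h⟩ | ⟨rfl, h⟩)
      · exact Or.inl ⟨y', h, rfl, rfl⟩
      · exact Or.inr ⟨x', h, rfl, rfl⟩
    · rintro (⟨y'', h, rfl, rfl⟩ | ⟨x'', h, rfl, rfl⟩)
      · exact Or.inl ⟨rfl, h⟩
      · exact Or.inr ⟨rfl, h⟩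
  have hdisj : Disjoint ((univ.filter (fun y => H.Adj v y)).map ⟨(x, ·), Prod.mk_right_injective x⟩)
      ((univ.filter (fun x' => G.Adj x x')).map ⟨(·, v), Prod.mk_left_injective v⟩) := by
    simp only [disjoint_left, mem_map, mem_filter, mem_univ, true_and, Function.Embedding.coeFn_mk]
    rintro _ ⟨y, hy, rfl⟩ ⟨x', -, hx'⟩
    exact H.ne_of_adj hy (congrArg Prod.snd hx')
  rw [nbrWeight, hnbr, sum_union hdisj, sum_map, sum_map]
  rfl

theorem isIDF_rootedProd_iff {f : α × β → ℕ} :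
    IsIDF (rootedProd G H v) f ↔
      (∀ x, IsIDFAwayFrom H v (fun y => f (x, y))) ∧
        ∀ x, f (x, v) = 0 →
          2 ≤ nbrWeight H (fun y => f (x, y)) v + nbrWeight G (fun x' => f (x', v)) x := by
  simp only [isIDF_iff, IsIDFAwayFrom, Prod.forall]
  constructor
  · rintro ⟨h2, h0⟩
    refine ⟨fun x => ⟨h2 x, fun y hy hf => ?_⟩, fun x hf => ?_⟩
    · simpa [nbrWeight_rootedProd_of_ne G H v f x hy] using h0 x y hf
    · simpa [nbrWeight_rootedProd_root] using h0 x v hf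
  · rintro ⟨hcopy, hroot⟩
    refine ⟨fun x y => (hcopy x).1 y, fun x y hf => ?_⟩
    by_cases hy : y = v
    · subst hy
      rw [nbrWeight_rootedProd_root]
      exact hroot x hf
    · rw [nbrWeight_rootedProd_of_ne G H v f x hy]
      exact (hcopy x).2 y hy hf

end RootedProd

section UpperBounds

variable {α β : Type*} [Fintype α] [Fintype β] (G : SimpleGraph α) (H : SimpleGraph β) (v : β)

theorem italianNumber_rootedProd_le {φ : α → β → ℕ} (hφ : ∀ x, IsIDFAwayFrom H v (φ x))
    (hroot : ∀ x, φ x v = 0 → 2 ≤ nbrWeight H (φ x) v + nbrWeight G (fun x' => φ x' v) x) :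
    italianNumber (rootedProd G H v) ≤ ∑ x, ∑ y, φ x y :=
  (italianNumber_le _ ((isIDF_rootedProd_iff G H v (f := fun p => φ p.1 p.2)).mpr
    ⟨hφ, hroot⟩)).trans_eq (Fintype.sum_prod_type _)

variable {G H v}

/-- Every copy carries `g` off the root; the roots carry `r`. -/
theorem italianNumber_rootedProd_le_of_extendRoot {g : {w : β // w ≠ v} → ℕ}
    (hg : IsIDF (deleteVertex H v) g) {r : α → ℕ} (hr : ∀ x, r x ≤ 2)
    (hroot : ∀ x, r x = 0 → 2 ≤ nbrWeight H (extendRoot v 0 g) v + nbrWeight G r x) :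
    italianNumber (rootedProd G H v) ≤ Fintype.card α * ∑ b, g b + ∑ x, r x := by
  calc italianNumber (rootedProd G H v) ≤ ∑ x, ∑ y, extendRoot v (r x) g y := by
        refine italianNumber_rootedProd_le G H v (fun x => hg.isIDFAwayFrom_extendRoot (hr x))
          fun x hx => ?_
        rw [nbrWeight_extendRoot_self 0]
        simpa only [extendRoot_self] using hroot x (by simpa using hx)
    _ = Fintype.card α * ∑ b, g b + ∑ x, r x := by
        simp [sum_extendRoot, sum_add_distrib, add_comm]

theorem italianNumber_rootedProd_le_card_mul_add_italianNumber {g : {w : β // w ≠ v} → ℕ}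
    (hg : IsIDF (deleteVertex H v) g) :
    italianNumber (rootedProd G H v) ≤ Fintype.card α * ∑ b, g b + italianNumber G := by
  obtain ⟨r, hr, hrw⟩ := exists_isMinIDF G
  rw [← hrw]
  exact italianNumber_rootedProd_le_of_extendRoot hg hr.1 fun x hx => le_add_left (hr.2 x hx)

/-- A root outside a dominating set `D` sees 1 from its own copy and 1 from a root in `D`. -/
theorem italianNumber_rootedProd_le_card_mul_add_dominationNumber
    {g : {w : β // w ≠ v} → ℕ} (hg : IsIDF (deleteVertex H v) g) {y : β} (hy : H.Adj v y)
    (hgy : g ⟨y, (H.ne_of_adj hy).symm⟩ ≠ 0) :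
    italianNumber (rootedProd G H v) ≤ Fintype.card α * ∑ b, g b + dominationNumber G := by
  obtain ⟨D, hD, hDcard⟩ := exists_isDomSet_card_eq G
  have hown : 1 ≤ nbrWeight H (extendRoot v 0 g) v := by
    have := le_nbrWeight_of_adj H (extendRoot v 0 g) hy
    rw [extendRoot_of_ne (H.ne_of_adj hy).symm] at this
    omega
  have hsum : ∑ x, (if x ∈ D then 1 else 0) = D.card := by simp
  rw [← hDcard, ← hsum]
  refine italianNumber_rootedProd_le_of_extendRoot hg (fun x => by split_ifs <;> omega)
    fun x hx => ?_
  obtain ⟨x', hx'D, hxx'⟩ := hD x (by simpa using hx)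
  have : 1 ≤ nbrWeight G (fun x => if x ∈ D then 1 else 0) x := by
    simpa [mem_coe.mp hx'D] using le_nbrWeight_of_adj G (fun x => if x ∈ D then 1 else 0) hxx'
  omega

/-- The copies over a dominating set `D` carry `h`, all other copies carry `g` with root value 0. -/
theorem italianNumber_rootedProd_le_of_root_eq_two {h : β → ℕ} (hh : IsIDF H h) (hv : h v = 2)
    {g : {w : β // w ≠ v} → ℕ} (hg : IsIDF (deleteVertex H v) g) {D : Finset α}
    (hD : IsDomSet G ↑D) :
    italianNumber (rootedProd G H v) ≤
      D.card * ∑ y, h y + (Fintype.card α - D.card) * ∑ b, g b := by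
  calc italianNumber (rootedProd G H v)
      ≤ ∑ x, ∑ y, (if x ∈ D then h else extendRoot v 0 g) y := by
        refine italianNumber_rootedProd_le G H v (fun x => ?_) fun x hx => ?_
        · split_ifs
          · exact hh.isIDFAwayFrom
          · exact hg.isIDFAwayFrom_extendRoot zero_le_two
        · have hxD : x ∉ D := fun hxD => by simp [hxD, hv] at hx
          obtain ⟨x', hx'D, hxx'⟩ := hD x hxD
          have := le_nbrWeight_of_adj G (fun x' => (if x' ∈ D then h else extendRoot v 0 g) v) hxx'
          simp only [mem_coe.mp hx'D, if_true, hv] at this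
          omega
    _ = D.card * ∑ y, h y + (Fintype.card α - D.card) * ∑ b, g b := by
        simp [apply_ite (fun φ : β → ℕ => ∑ y, φ y), sum_ite, sum_extendRoot, filter_not,
          card_sdiff]

end UpperBounds

section LowerBounds

variable {α β : Type*} [Fintype α] [Fintype β] {G : SimpleGraph α} {H : SimpleGraph β} {v : β}
  {f : α × β → ℕ}

theorem IsIDF.isIDFAwayFrom_copy (hf : IsIDF (rootedProd G H v) f) (x : α) :
    IsIDFAwayFrom H v (fun y => f (x, y)) :=
  ((isIDF_rootedProd_iff G H v).mp hf).1 x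

theorem IsIDF.isIDF_copy (hf : IsIDF (rootedProd G H v) f) {x : α} (hx : f (x, v) ≠ 0) :
    IsIDF H (fun y => f (x, y)) :=
  (hf.isIDFAwayFrom_copy x).isIDF fun h => absurd h hx

theorem IsIDF.root_eq_zero_of_copyWeight_lt (hf : IsIDF (rootedProd G H v) f) {x : α}
    (hlt : copyWeight f x < italianNumber H) : f (x, v) = 0 := by
  by_contra hx
  exact (italianNumber_le H (hf.isIDF_copy hx)).not_gt hlt

omit [Fintype α] in
theorem sum_deleteVertex_eq_copyWeight {x : α} (h0 : f (x, v) = 0) :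
    ∑ b : {w : β // w ≠ v}, f (x, b) = copyWeight f x := by
  rw [copyWeight, Fintype.sum_eq_add_sum_subtype_ne _ v, h0, zero_add]

theorem IsIDF.min_le_copyWeight (hf : IsIDF (rootedProd G H v) f) (x : α) :
    min (italianNumber H) (italianNumber (deleteVertex H v)) ≤ copyWeight f x := by
  by_cases hlt : copyWeight f x < italianNumber H
  · have h0 := hf.root_eq_zero_of_copyWeight_lt hlt
    have := italianNumber_le _ ((hf.isIDFAwayFrom_copy x).isIDF_deleteVertex h0)
    rw [sum_deleteVertex_eq_copyWeight h0] at this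
    exact min_le_of_right_le this
  · exact min_le_of_left_le (not_lt.mp hlt)

variable (G H v) in
theorem card_mul_min_le_italianNumber_rootedProd :
    Fintype.card α * min (italianNumber H) (italianNumber (deleteVertex H v)) ≤
      italianNumber (rootedProd G H v) := by
  refine le_italianNumber _ fun f hf => ?_
  calc Fintype.card α * min (italianNumber H) (italianNumber (deleteVertex H v))
      = ∑ _x : α, min (italianNumber H) (italianNumber (deleteVertex H v)) := by simp
    _ ≤ ∑ x, copyWeight f x := sum_le_sum fun x _ => hf.min_le_copyWeight x
    _ = ∑ p, f p := (Fintype.sum_prod_type f).symm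

theorem IsIDF.root_add_le_copyWeight (hf : IsIDF (rootedProd G H v) f)
    (hd : italianNumber H - 1 ≤ italianNumber (deleteVertex H v))
    (hii : ∀ h : β → ℕ, IsMinIDF H h → h v ≠ 2) (x : α) :
    f (x, v) + (italianNumber H - 1) ≤ copyWeight f x := by
  by_cases h0 : f (x, v) = 0
  · rw [h0, zero_add]
    exact (le_min (Nat.sub_le _ _) hd).trans (hf.min_le_copyWeight x)
  have hH : italianNumber H ≤ copyWeight f x := italianNumber_le H (hf.isIDF_copy h0)
  have hne : f (x, v) = 2 → copyWeight f x ≠ italianNumber H :=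
    fun h2 heq => hii _ ⟨hf.isIDF_copy h0, heq⟩ h2
  have hle : f (x, v) ≤ 2 := hf.1 (x, v)
  have := one_le_italianNumber H v
  omega

theorem IsIDF.two_le_nbrWeight_roots (hf : IsIDF (rootedProd G H v) f)
    (hd : italianNumber (deleteVertex H v) = italianNumber H - 1)
    (hi : ∀ g : {w : β // w ≠ v} → ℕ, IsMinIDF (deleteVertex H v) g →
      ∀ y : β, ∀ hy : H.Adj v y, g ⟨y, (H.ne_of_adj hy).symm⟩ = 0)
    {x : α} (hx : copyWeight f x = italianNumber H - 1) :
    2 ≤ nbrWeight G (fun x' => f (x', v)) x := by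
  have hγ := one_le_italianNumber H v
  have h0 := hf.root_eq_zero_of_copyWeight_lt (hx.trans_lt (by omega))
  have hmin : IsMinIDF (deleteVertex H v) (fun b => f (x, b)) :=
    ⟨(hf.isIDFAwayFrom_copy x).isIDF_deleteVertex h0,
      by rw [sum_deleteVertex_eq_copyWeight h0, hx, hd]⟩
  have hown : nbrWeight H (fun y => f (x, y)) v = 0 :=
    sum_eq_zero fun y hy => hi _ hmin y (mem_filter.mp hy).2
  simpa [hown] using ((isIDF_rootedProd_iff G H v).mp hf).2 x h0

variable (G) in
theorem card_mul_pred_add_le_italianNumber_rootedProd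
    (hd : italianNumber (deleteVertex H v) = italianNumber H - 1)
    (hi : ∀ g : {w : β // w ≠ v} → ℕ, IsMinIDF (deleteVertex H v) g →
      ∀ y : β, ∀ hy : H.Adj v y, g ⟨y, (H.ne_of_adj hy).symm⟩ = 0)
    (hii : ∀ h : β → ℕ, IsMinIDF H h → h v ≠ 2) :
    Fintype.card α * (italianNumber H - 1) + italianNumber G ≤
      italianNumber (rootedProd G H v) := by
  refine le_italianNumber _ fun f hf => ?_
  have hcopy := hf.root_add_le_copyWeight hd.ge hii
  let w : α → ℕ := fun x => min (copyWeight f x - (italianNumber H - 1)) 2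
  have hroot : ∀ x, f (x, v) ≤ w x := fun x =>
    le_min (Nat.le_sub_of_add_le (hcopy x)) (hf.1 (x, v))
  have hw : IsIDF G w := by
    refine (isIDF_iff G).mpr ⟨fun x => min_le_right _ _, fun x hx => ?_⟩
    have hx' : copyWeight f x = italianNumber H - 1 := by
      have := hcopy x
      have := Nat.min_eq_zero_iff.mp hx
      omega
    exact (hf.two_le_nbrWeight_roots hd hi hx').trans (nbrWeight_mono G hroot x)
  calc Fintype.card α * (italianNumber H - 1) + italianNumber G
      ≤ ∑ x, (italianNumber H - 1 + w x) := by
        have := italianNumber_le G hw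
        simp only [sum_add_distrib, sum_const, card_univ, smul_eq_mul]
        omega
    _ ≤ ∑ x, copyWeight f x := sum_le_sum fun x _ => by
        have := hcopy x
        have : w x ≤ copyWeight f x - (italianNumber H - 1) := min_le_left _ _
        omega
    _ = ∑ p, f p := (Fintype.sum_prod_type f).symm

end LowerBounds

section Characterization

variable {α β : Type*} [Fintype α] [Fintype β] {G : SimpleGraph α} {H : SimpleGraph β} {v : β}

theorem italianNumber_deleteVertex_eq_of_rootedProd_eq (hn : italianNumber G < Fintype.card α)
    (heq : italianNumber (rootedProd G H v) =
      Fintype.card α * (italianNumber H - 1) + italianNumber G) :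
    italianNumber (deleteVertex H v) = italianNumber H - 1 := by
  obtain ⟨k, hk⟩ : ∃ k, italianNumber H = k + 1 :=
    Nat.exists_eq_add_of_le' (one_le_italianNumber H v)
  rw [hk, Nat.add_sub_cancel] at heq ⊢
  obtain ⟨g, hg⟩ := exists_isMinIDF (deleteVertex H v)
  have hup := italianNumber_rootedProd_le_card_mul_add_italianNumber (G := G) hg.1
  have hlow := card_mul_min_le_italianNumber_rootedProd G H v
  rw [hg.2] at hup
  rw [hk] at hlow
  have hge : k ≤ italianNumber (deleteVertex H v) :=
    Nat.le_of_mul_le_mul_left (by omega) (by omega : 0 < Fintype.card α)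
  have hlt : min (k + 1) (italianNumber (deleteVertex H v)) < k + 1 :=
    Nat.lt_of_mul_lt_mul_left (a := Fintype.card α) (by rw [mul_add_one]; omega)
  omega

theorem minIDF_deleteVertex_adj_eq_zero_of_rootedProd_eq
    (hGI : dominationNumber G < italianNumber G)
    (hd : italianNumber (deleteVertex H v) = italianNumber H - 1)
    (heq : italianNumber (rootedProd G H v) =
      Fintype.card α * (italianNumber H - 1) + italianNumber G)
    (g : {w : β // w ≠ v} → ℕ) (hg : IsMinIDF (deleteVertex H v) g) (y : β) (hy : H.Adj v y) :
    g ⟨y, (H.ne_of_adj hy).symm⟩ = 0 := by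
  by_contra hgy
  have := italianNumber_rootedProd_le_card_mul_add_dominationNumber (G := G) hg.1 hy hgy
  rw [hg.2, hd, heq] at this
  omega

theorem minIDF_root_ne_two_of_rootedProd_eq (hGI : dominationNumber G < italianNumber G)
    (hd : italianNumber (deleteVertex H v) = italianNumber H - 1)
    (heq : italianNumber (rootedProd G H v) =
      Fintype.card α * (italianNumber H - 1) + italianNumber G)
    (h : β → ℕ) (hh : IsMinIDF H h) : h v ≠ 2 := by
  intro hv
  obtain ⟨g, hg⟩ := exists_isMinIDF (deleteVertex H v)
  obtain ⟨D, hD, hDcard⟩ := exists_isDomSet_card_eq G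
  have hup := italianNumber_rootedProd_le_of_root_eq_two hh.1 hv hg.1 hD
  rw [hh.2, hg.2, hd, heq, hDcard] at hup
  obtain ⟨k, hk⟩ : ∃ k, italianNumber H = k + 1 :=
    Nat.exists_eq_add_of_le' (one_le_italianNumber H v)
  obtain ⟨m, hm⟩ : ∃ m, Fintype.card α = dominationNumber G + m :=
    Nat.exists_eq_add_of_le (hDcard ▸ card_le_univ D)
  rw [hk, hm, Nat.add_sub_cancel, Nat.add_sub_cancel_left] at hup
  nlinarith

end Characterization

theorem stmt18_general {α β : Type*} [Fintype α] [Fintype β]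
    (G : SimpleGraph α) (hG : ∃ u : α, 2 ≤ deg G u)
    (hGI : dominationNumber G < italianNumber G)
    (H : SimpleGraph β) (v : β) :
    italianNumber (rootedProd G H v) =
        Fintype.card α * (italianNumber H - 1) + italianNumber G ↔
      (italianNumber (deleteVertex H v) = italianNumber H - 1 ∧
        (∀ g : {w : β // w ≠ v} → ℕ, IsMinIDF (deleteVertex H v) g →
          ∀ y : β, ∀ hy : H.Adj v y, g ⟨y, (H.ne_of_adj hy).symm⟩ = 0) ∧
        (∀ h : β → ℕ, IsMinIDF H h → h v ≠ 2)) := by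
  constructor
  · intro heq
    have hd := italianNumber_deleteVertex_eq_of_rootedProd_eq (italianNumber_lt_card G hG) heq
    exact ⟨hd, minIDF_deleteVertex_adj_eq_zero_of_rootedProd_eq hGI hd heq,
      minIDF_root_ne_two_of_rootedProd_eq hGI hd heq⟩
  · rintro ⟨hd, hi, hii⟩
    obtain ⟨g, hg⟩ := exists_isMinIDF (deleteVertex H v)
    refine le_antisymm ?_ (card_mul_pred_add_le_italianNumber_rootedProd G hd hi hii)
    simpa [hg.2, hd] using italianNumber_rootedProd_le_card_mul_add_italianNumber (G := G) hg.1

/-- Theorem: for G of maximum degree at least 2 with γ(G) < γ_I(G),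
γ_I(G∘_v H) = n(G)(γ_I(H)−1)+γ_I(G) iff γ_I(H−{v}) = γ_I(H)−1 and both: (i) every
γ_I(H−{v})-function g satisfies g(y) = 0 for every neighbour y of v in H, and
(ii) every γ_I(H)-function h satisfies h(v) ≠ 2. -/
theorem stmt18 {α β : Type*} [Fintype α] [Nonempty α] [Fintype β]
    (G : SimpleGraph α) (hG : ∃ u : α, 2 ≤ deg G u)
    (hGI : dominationNumber G < italianNumber G)
    (H : SimpleGraph β) (v : β) :
    italianNumber (rootedProd G H v) =
        Fintype.card α * (italianNumber H - 1) + italianNumber G ↔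
      (italianNumber (deleteVertex H v) = italianNumber H - 1 ∧
        (∀ g : {w : β // w ≠ v} → ℕ, IsMinIDF (deleteVertex H v) g →
          ∀ y : β, ∀ hy : H.Adj v y, g ⟨y, (H.ne_of_adj hy).symm⟩ = 0) ∧
        (∀ h : β → ℕ, IsMinIDF H h → h v ≠ 2)) :=
  stmt18_general G hG hGI H v
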